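/- Let h>0 and α,β>0, and let u: ℕ→ℝ be any sequence. Then the composition of fractional h-sums satisfies the semigroup property: for every n∈ℕ, (S_α(S_β u))(n) = (S_{α+β} u)(n) = (S_β(S_α u))(n). -/

import Mathlib

/-- `c γ m = Γ(γ+m)/(Γ(γ)·Γ(m+1))`. -/
noncomputable def cCoeff (γ : ℝ) (m : ℕ) : ℝ :=
  Real.Gamma (γ + m) / (Real.Gamma γ * Real.Gamma (m + 1))

/-- Fractional `h`-sum of order `γ`: `(S_γ u)(n) = h^γ·∑_{k=0}^{n} c_γ(n−k)·u(k)`. -/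
noncomputable def fracSum (h γ : ℝ) (u : ℕ → ℝ) (n : ℕ) : ℝ :=
  h ^ γ * ∑ k ∈ Finset.range (n + 1), cCoeff γ (n - k) * u k

/-!
The coefficient `c_γ(m)` is the multiset coefficient `γ(γ+1)⋯(γ+m-1)/m!`, i.e. the `m`-th
coefficient of `(1 - X)^(-γ)`. Hence `S_γ` multiplies the generating function of `u` by
`h^γ (1 - X)^(-γ)`, and the semigroup law is `(1 - X)^(-α) (1 - X)^(-β) = (1 - X)^(-(α+β))`,
which is Vandermonde's identity for binomial coefficients with real upper argument.
-/

open PowerSeries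

theorem Real.Gamma_add_nat_eq_ascPochhammer_mul {γ : ℝ} (hγ : ∀ k : ℕ, γ ≠ -k)
    (n : ℕ) : Real.Gamma (γ + n) = (ascPochhammer ℝ n).eval γ * Real.Gamma γ := by
  induction n with
  | zero => simp
  | succ n ih =>
    have hne : γ + n ≠ 0 := fun h => hγ n (eq_neg_of_add_eq_zero_left h)
    rw [Nat.cast_succ, ← add_assoc, Real.Gamma_add_one hne, ih, ascPochhammer_succ_right,
      Polynomial.eval_mul, Polynomial.eval_add, Polynomial.eval_X, Polynomial.eval_natCast]
    ring

theorem cCoeff_eq_multichoose {γ : ℝ} (hγ : ∀ k : ℕ, γ ≠ -k) (n : ℕ) :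
    cCoeff γ n = Ring.multichoose γ n := by
  have hpoch := Ring.factorial_nsmul_multichoose_eq_ascPochhammer γ n
  rw [Polynomial.ascPochhammer_smeval_eq_eval, nsmul_eq_mul] at hpoch
  rw [cCoeff, Real.Gamma_add_nat_eq_ascPochhammer_mul hγ, Real.Gamma_nat_eq_factorial, ← hpoch]
  field_simp [Real.Gamma_ne_zero hγ]

theorem mk_cCoeff_eq_rescale_binomialSeries {γ : ℝ} (hγ : ∀ k : ℕ, γ ≠ -k) :
    mk (cCoeff γ) = rescale (-1) (binomialSeries ℝ (-γ)) := by
  ext n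
  rw [coeff_mk, coeff_rescale, binomialSeries_coeff, Ring.choose_neg', cCoeff_eq_multichoose hγ,
    smul_eq_mul, mul_one, Units.smul_def, zsmul_eq_mul, Int.cast_negOnePow_natCast, ← mul_assoc,
    ← mul_pow]
  simp

theorem mk_cCoeff_add {α β : ℝ} (hα : ∀ k : ℕ, α ≠ -k) (hβ : ∀ k : ℕ, β ≠ -k)
    (hαβ : ∀ k : ℕ, α + β ≠ -k) :
    mk (cCoeff (α + β)) = mk (cCoeff α) * mk (cCoeff β) := by
  rw [mk_cCoeff_eq_rescale_binomialSeries hα, mk_cCoeff_eq_rescale_binomialSeries hβ,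
    mk_cCoeff_eq_rescale_binomialSeries hαβ, ← map_mul, ← binomialSeries_add, neg_add]

theorem mk_fracSum (h γ : ℝ) (u : ℕ → ℝ) :
    mk (fracSum h γ u) = h ^ γ • (mk (cCoeff γ) * mk u) := by
  ext n
  rw [coeff_mk, coeff_smul, mul_comm, coeff_mul, Finset.Nat.sum_antidiagonal_eq_sum_range_succ_mk]
  simp [fracSum, mul_comm]

theorem fracSum_fracSum {h : ℝ} (hh : 0 < h) {α β : ℝ} (hα : ∀ k : ℕ, α ≠ -k)
    (hβ : ∀ k : ℕ, β ≠ -k) (hαβ : ∀ k : ℕ, α + β ≠ -k) (u : ℕ → ℝ) :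
    fracSum h α (fracSum h β u) = fracSum h (α + β) u := by
  have hmk : mk (fracSum h α (fracSum h β u)) = mk (fracSum h (α + β) u) := by
    rw [mk_fracSum, mk_fracSum, mk_fracSum, mk_cCoeff_add hα hβ hαβ, Real.rpow_add hh, mul_smul,
      mul_smul_comm, mul_assoc]
  funext n
  simpa using congrArg (coeff n) hmk

theorem ne_neg_natCast_of_pos {γ : ℝ} (hγ : 0 < γ) (k : ℕ) : γ ≠ -k := by
  linarith [k.cast_nonneg (α := ℝ)]

theorem fracSum_semigroup (h α β : ℝ) (hh : 0 < h) (hα : 0 < α) (hβ : 0 < β)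
    (u : ℕ → ℝ) (n : ℕ) :
    fracSum h α (fracSum h β u) n = fracSum h (α + β) u n
      ∧ fracSum h β (fracSum h α u) n = fracSum h (α + β) u n := by
  have hα' := ne_neg_natCast_of_pos hα
  have hβ' := ne_neg_natCast_of_pos hβ
  refine ⟨?_, ?_⟩
  · rw [fracSum_fracSum hh hα' hβ' (ne_neg_natCast_of_pos (add_pos hα hβ))]
  · rw [fracSum_fracSum hh hβ' hα' (ne_neg_natCast_of_pos (add_pos hβ hα)), add_comm]
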